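/- arXiv:2004.11635 — 4 statements merged into one kernel-verified Lean document; each statement's English description precedes it below -/
import Mathlib

section
/- Let K be a non-Archimedean field, V a finite-dimensional K-vector space, and for each integer m ≥ 1 let W_m be a K-vector space equipped with a surjective K-linear map π_m : V^{⊗m} → W_m, with W_1 = V and π_1 = id. Given two non-Archimedean norms N, N' on V, let N_m (resp. N'_m) be the quotient norm on W_m induced by the m-fold tensor power norm N^{⊗m} (resp. N'^{⊗m}) via π_m. Then d_∞(N_m, N'_m) ≤ m·d_∞(N, N') for every m ≥ 1, and consequently sup_{m ≥ 1} m^{-1}·d_∞(N_m, N'_m) = d_∞(N, N'). -/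
open scoped BigOperators TensorProduct

/-- A non-Archimedean norm on a `K`-vector space `V`. -/
def IsNAnorm (K : Type*) {V : Type*} [NormedField K] [AddCommGroup V] [Module K V]
    (N : V → ℝ) : Prop :=
  (∀ v, 0 ≤ N v) ∧ (∀ v, N v = 0 ↔ v = 0) ∧
  (∀ (a : K) (v : V), N (a • v) = ‖a‖ * N v) ∧
  (∀ v w : V, N (v + w) ≤ max (N v) (N w))

/-- The sup-distance `d_∞` between two norms on `V`. -/
noncomputable def dInfty {V : Type*} [AddCommGroup V] (N N' : V → ℝ) : ℝ :=
  sSup {r | ∃ v : V, v ≠ 0 ∧ r = |Real.log (N' v) - Real.log (N v)|}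

/-- The quotient norm induced by a norm `N` on `V` along a (surjective) linear map `π`. -/
noncomputable def quotNorm {K V W : Type*} [Field K] [AddCommGroup V] [Module K V]
    [AddCommGroup W] [Module K W] (π : V →ₗ[K] W) (N : V → ℝ) (x : W) : ℝ :=
  sInf {r | ∃ v : V, π v = x ∧ r = N v}

/-- The `m`-fold tensor power norm `N^{⊗m}` on `V^{⊗m}`: the infimum, over all representations
of `t` as a finite sum of pure tensors, of the maximum of the products of the norms of the
factors. -/
noncomputable def tensorPowNorm (K : Type*) {V : Type*} [NormedField K] [AddCommGroup V]
    [Module K V] (N : V → ℝ) (m : ℕ) (t : ⨂[K]^m V) : ℝ :=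
  sInf {r | ∃ (n : ℕ) (v : Fin (n + 1) → Fin m → V),
    t = ∑ i, PiTensorProduct.tprod K (v i) ∧
    r = Finset.univ.sup' Finset.univ_nonempty fun i => ∏ j, N (v i j)}


/-!
A comparison `N' ≤ C • N` of norms on `V` gives `N'^{⊗m} ≤ C^m • N^{⊗m}`, by comparing the two
norms on each representation of a tensor as a sum of pure tensors, and then the same comparison
for the quotient norms. With `C = exp d_∞(N, N')`, which is finite because all norms on a
finite-dimensional space are equivalent, this is `d_∞(N_m, N'_m) ≤ m d_∞(N, N')`. For `m = 1` the
tensor power norm of `v` is `N v`, since by the ultrametric inequality a sum of vectors has norm at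
most the maximum of their norms; so the supremum is attained at `m = 1`.
-/

open PiTensorProduct

namespace IsNAnorm

variable {K V : Type*} [NormedField K] [AddCommGroup V] [Module K V] {N : V → ℝ}

lemma nonneg (hN : IsNAnorm K N) (v : V) : 0 ≤ N v := hN.1 v

lemma eq_zero_iff (hN : IsNAnorm K N) {v : V} : N v = 0 ↔ v = 0 := hN.2.1 v

lemma map_smul (hN : IsNAnorm K N) (a : K) (v : V) : N (a • v) = ‖a‖ * N v := hN.2.2.1 a v

lemma isNonarchimedean (hN : IsNAnorm K N) : IsNonarchimedean N := hN.2.2.2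

lemma map_zero (hN : IsNAnorm K N) : N 0 = 0 := hN.eq_zero_iff.2 rfl

lemma pos (hN : IsNAnorm K N) {v : V} (hv : v ≠ 0) : 0 < N v :=
  (hN.nonneg v).lt_of_ne' (mt hN.eq_zero_iff.1 hv)

noncomputable abbrev toNormedAddCommGroup (hN : IsNAnorm K N) : NormedAddCommGroup V :=
  AddGroupNorm.toNormedAddCommGroup
    { toFun := N
      map_zero' := hN.map_zero
      add_le' := fun v w =>
        (hN.isNonarchimedean v w).trans (max_le_add_of_nonneg (hN.nonneg v) (hN.nonneg w))
      neg' := fun v => by simpa using hN.map_smul (-1) v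
      eq_zero_of_map_eq_zero' := fun _ => hN.eq_zero_iff.1 }

noncomputable abbrev toNormedSpace (hN : IsNAnorm K N) :
    @NormedSpace K V _ hN.toNormedAddCommGroup.toSeminormedAddCommGroup :=
  @NormedSpace.mk K V _ hN.toNormedAddCommGroup.toSeminormedAddCommGroup _
    fun a v => (hN.map_smul a v).le

end IsNAnorm

lemma LinearMap.exists_bound_of_finiteDimensional {K E F : Type*} [NontriviallyNormedField K]
    [CompleteSpace K] [NormedAddCommGroup E] [NormedSpace K E] [FiniteDimensional K E]
    [NormedAddCommGroup F] [NormedSpace K F] (f : E →ₗ[K] F) :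
    ∃ C, 0 < C ∧ ∀ v, ‖f v‖ ≤ C * ‖v‖ :=
  ContinuousLinearMap.bound ⟨f, f.continuous_of_finiteDimensional⟩

section NormEquivalence

variable {K V : Type*} [AddCommGroup V] {N N' : V → ℝ}

lemma IsNAnorm.exists_le_mul_of_nontriviallyNormedField [NontriviallyNormedField K]
    [CompleteSpace K] [Module K V] [FiniteDimensional K V]
    (hN : IsNAnorm K N) (hN' : IsNAnorm K N') : ∃ C, ∀ v, N' v ≤ C * N v := by
  obtain ⟨C, -, hC⟩ := @LinearMap.exists_bound_of_finiteDimensional K V V _ _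
    hN.toNormedAddCommGroup hN.toNormedSpace ‹_› hN'.toNormedAddCommGroup hN'.toNormedSpace
    LinearMap.id
  exact ⟨C, hC⟩

variable [NormedField K] [Module K V]

def IsNAnorm.sublevelSubmodule (htriv : ∀ a : K, a ≠ 0 → ‖a‖ = 1) (hN : IsNAnorm K N)
    {c : ℝ} (hc : 0 ≤ c) : Submodule K V where
  carrier := {v | N v ≤ c}
  add_mem' hv hw := (hN.isNonarchimedean _ _).trans (max_le hv hw)
  zero_mem' := by simpa [hN.map_zero] using hc
  smul_mem' a v hv := by
    rcases eq_or_ne a 0 with rfl | ha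
    · simpa [hN.map_zero] using hc
    · simpa [hN.map_smul, htriv a ha] using hv

/-- Distinct values of `N` have sublevel subspaces of distinct dimensions. -/
lemma IsNAnorm.finite_image_ne_zero [FiniteDimensional K V] (htriv : ∀ a : K, a ≠ 0 → ‖a‖ = 1)
    (hN : IsNAnorm K N) : (N '' {v | v ≠ 0}).Finite := by
  set S := N '' {v | v ≠ 0}
  have hS : ∀ c ∈ S, 0 ≤ c := by rintro _ ⟨v, -, rfl⟩; exact hN.nonneg v
  let dim : S → Fin (Module.finrank K V + 1) := fun c =>
    ⟨Module.finrank K (hN.sublevelSubmodule htriv (hS c c.2)),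
      Nat.lt_succ_of_le (Submodule.finrank_le _)⟩
  have hdim : StrictMono dim := by
    rintro c ⟨_, ⟨v, -, rfl⟩⟩ (hlt : c.1 < N v)
    refine Submodule.finrank_lt_finrank_of_lt (SetLike.lt_iff_le_and_exists.2
      ⟨fun w (hw : N w ≤ c) => hw.trans hlt.le, v, le_refl (N v), not_le.2 hlt⟩)
  have : Finite S := Finite.of_injective dim hdim.injective
  exact S.toFinite

lemma IsNAnorm.exists_le_mul_of_trivial [FiniteDimensional K V]
    (htriv : ∀ a : K, a ≠ 0 → ‖a‖ = 1) (hN : IsNAnorm K N) (hN' : IsNAnorm K N') :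
    ∃ C, ∀ v, N' v ≤ C * N v := by
  obtain ⟨C, hC⟩ := ((hN'.finite_image_ne_zero htriv).image2 (· / ·)
    (hN.finite_image_ne_zero htriv)).bddAbove
  refine ⟨C, fun v => ?_⟩
  rcases eq_or_ne v 0 with rfl | hv
  · simp [hN.map_zero, hN'.map_zero]
  · exact (div_le_iff₀ (hN.pos hv)).1 (hC (Set.mem_image2_of_mem ⟨v, hv, rfl⟩ ⟨v, hv, rfl⟩))

lemma IsNAnorm.exists_le_mul [CompleteSpace K] [FiniteDimensional K V]
    (hN : IsNAnorm K N) (hN' : IsNAnorm K N') : ∃ C, ∀ v, N' v ≤ C * N v := by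
  by_cases htriv : ∀ a : K, a ≠ 0 → ‖a‖ = 1
  · exact hN.exists_le_mul_of_trivial htriv hN'
  · push Not at htriv
    obtain ⟨a, ha0, ha1⟩ := htriv
    have hK : ∃ b : K, 1 < ‖b‖ := by
      rcases ha1.lt_or_gt with h | h
      · exact ⟨a⁻¹, by rwa [norm_inv, one_lt_inv₀ (norm_pos_iff.2 ha0)]⟩
      · exact ⟨a, h⟩
    let _ : NontriviallyNormedField K := { ‹NormedField K› with non_trivial := hK }
    exact hN.exists_le_mul_of_nontriviallyNormedField hN'

end NormEquivalence

lemma abs_log_sub_log_le {x y c : ℝ} (hx : 0 < x) (hy : 0 < y) (h₁ : y ≤ c * x)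
    (h₂ : x ≤ c * y) : |Real.log y - Real.log x| ≤ Real.log c := by
  have hc : 0 < c := pos_of_mul_pos_left (hy.trans_le h₁) hx.le
  have hy' := Real.log_le_log hy h₁
  have hx' := Real.log_le_log hx h₂
  rw [Real.log_mul hc.ne' hx.ne'] at hy'
  rw [Real.log_mul hc.ne' hy.ne'] at hx'
  exact abs_sub_le_iff.2 ⟨by linarith, by linarith⟩

section dInfty

variable {V : Type*} [AddCommGroup V]

lemma dInfty_nonneg (N N' : V → ℝ) : 0 ≤ dInfty N N' :=
  Real.sSup_nonneg (by rintro _ ⟨v, -, rfl⟩; exact abs_nonneg _)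

lemma dInfty_comm (N N' : V → ℝ) : dInfty N N' = dInfty N' N := by
  simp only [dInfty, abs_sub_comm]

lemma dInfty_comp_addEquiv {W : Type*} [AddCommGroup W] (e : W ≃+ V) (N N' : V → ℝ) :
    dInfty (N ∘ e) (N' ∘ e) = dInfty N N' := by
  unfold dInfty
  congr 1
  ext r
  constructor
  · rintro ⟨w, hw, rfl⟩
    exact ⟨e w, (map_ne_zero_iff e e.injective).2 hw, rfl⟩
  · rintro ⟨v, hv, rfl⟩
    refine ⟨e.symm v, (map_ne_zero_iff e.symm e.symm.injective).2 hv, ?_⟩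
    simp

lemma dInfty_le_of_le_exp_mul {M M' : V → ℝ} {D : ℝ} (hD : 0 ≤ D) (hM : ∀ v, 0 ≤ M v)
    (hM' : ∀ v, 0 ≤ M' v) (h₁ : ∀ v, M' v ≤ Real.exp D * M v)
    (h₂ : ∀ v, M v ≤ Real.exp D * M' v) : dInfty M M' ≤ D := by
  refine Real.sSup_le ?_ hD
  rintro _ ⟨v, -, rfl⟩
  rcases (hM v).eq_or_lt with hv | hv
  · have hv' : M' v = 0 := ((h₁ v).trans_eq (by rw [← hv, mul_zero])).antisymm (hM' v)
    simpa [← hv, hv'] using hD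
  · have hv' : 0 < M' v := by
      by_contra! h
      linarith [h₂ v, mul_nonpos_of_nonneg_of_nonpos (Real.exp_pos D).le h]
    simpa using abs_log_sub_log_le hv hv' (h₁ v) (h₂ v)

variable {K : Type*} [NormedField K] [CompleteSpace K] [Module K V] [FiniteDimensional K V]
  {N N' : V → ℝ}

lemma IsNAnorm.bddAbove_abs_log_sub_log (hN : IsNAnorm K N) (hN' : IsNAnorm K N') :
    BddAbove {r | ∃ v : V, v ≠ 0 ∧ r = |Real.log (N' v) - Real.log (N v)|} := by
  obtain ⟨C₁, hC₁⟩ := hN.exists_le_mul hN'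
  obtain ⟨C₂, hC₂⟩ := hN'.exists_le_mul hN
  refine ⟨Real.log (max C₁ C₂), ?_⟩
  rintro _ ⟨v, hv, rfl⟩
  exact abs_log_sub_log_le (hN.pos hv) (hN'.pos hv)
    ((hC₁ v).trans (mul_le_mul_of_nonneg_right (le_max_left _ _) (hN.nonneg v)))
    ((hC₂ v).trans (mul_le_mul_of_nonneg_right (le_max_right _ _) (hN'.nonneg v)))

lemma IsNAnorm.le_exp_dInfty_mul (hN : IsNAnorm K N) (hN' : IsNAnorm K N') (v : V) :
    N' v ≤ Real.exp (dInfty N N') * N v := by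
  rcases eq_or_ne v 0 with rfl | hv
  · simp [hN.map_zero, hN'.map_zero]
  have hlog : Real.log (N' v) - Real.log (N v) ≤ dInfty N N' :=
    (le_abs_self _).trans (le_csSup (hN.bddAbove_abs_log_sub_log hN') ⟨v, hv, rfl⟩)
  calc N' v = Real.exp (Real.log (N' v) - Real.log (N v)) * N v := by
        rw [Real.exp_sub, Real.exp_log (hN'.pos hv), Real.exp_log (hN.pos hv),
          div_mul_cancel₀ _ (hN.pos hv).ne']
    _ ≤ Real.exp (dInfty N N') * N v := by gcongr; exact hN.nonneg v

end dInfty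

lemma sInf_image_le_mul_sInf_image {ι : Type*} {s : Set ι} {f g : ι → ℝ} {c : ℝ}
    (hg : ∀ i ∈ s, 0 ≤ g i) (hc : 0 ≤ c) (h : ∀ i ∈ s, g i ≤ c * f i) :
    sInf (g '' s) ≤ c * sInf (f '' s) := by
  rcases s.eq_empty_or_nonempty with rfl | hs
  · simp
  have hbdd : BddBelow (g '' s) := ⟨0, Set.forall_mem_image.2 hg⟩
  rw [← smul_eq_mul, ← Real.sInf_smul_of_nonneg hc, ← Set.image_smul, Set.image_image]
  exact le_csInf (hs.image _) (Set.forall_mem_image.2 fun i hi =>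
    (csInf_le hbdd (Set.mem_image_of_mem g hi)).trans (h i hi))

section quotNorm

variable {K V W : Type*} [Field K] [AddCommGroup V] [Module K V] [AddCommGroup W] [Module K W]

lemma quotNorm_eq_sInf_image (π : V →ₗ[K] W) (M : V → ℝ) (x : W) :
    quotNorm π M x = sInf (M '' (π ⁻¹' {x})) := by
  simp only [quotNorm, Set.image, Set.mem_preimage, Set.mem_singleton_iff, eq_comm]

lemma quotNorm_nonneg (π : V →ₗ[K] W) {M : V → ℝ} (hM : ∀ v, 0 ≤ M v) (x : W) :
    0 ≤ quotNorm π M x := by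
  rw [quotNorm_eq_sInf_image]
  exact Real.sInf_nonneg (Set.forall_mem_image.2 fun v _ => hM v)

lemma quotNorm_le_mul (π : V →ₗ[K] W) {M M' : V → ℝ} {c : ℝ} (hM' : ∀ v, 0 ≤ M' v)
    (hc : 0 ≤ c) (h : ∀ v, M' v ≤ c * M v) (x : W) :
    quotNorm π M' x ≤ c * quotNorm π M x := by
  simp only [quotNorm_eq_sInf_image]
  exact sInf_image_le_mul_sInf_image (fun v _ => hM' v) hc fun v _ => h v

lemma quotNorm_linearEquiv (e : V ≃ₗ[K] W) (M : V → ℝ) :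
    quotNorm (e : V →ₗ[K] W) M = M ∘ e.symm := by
  ext x
  have : (e : V →ₗ[K] W) ⁻¹' {x} = {e.symm x} := by
    ext v
    simp [e.eq_symm_apply]
  rw [quotNorm_eq_sInf_image, this, Set.image_singleton, csInf_singleton, Function.comp_apply]

end quotNorm

section tensorPowNorm

variable {K V : Type*} [NormedField K] [AddCommGroup V] [Module K V]

lemma tensorPowNorm_eq_sInf_image (N : V → ℝ) (m : ℕ) (t : ⨂[K]^m V) :
    tensorPowNorm K N m t =
      sInf ((fun a : Σ n, Fin (n + 1) → Fin m → V =>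
          Finset.univ.sup' Finset.univ_nonempty fun i => ∏ j, N (a.2 i j)) ''
        {a | t = ∑ i, tprod K (a.2 i)}) := by
  simp only [tensorPowNorm, Set.image, Set.mem_ofPred_eq, Sigma.exists,
    @eq_comm ℝ _ (Finset.sup' _ _ _)]

lemma tensorPowNorm_nonneg {N : V → ℝ} (hN : ∀ v, 0 ≤ N v) (m : ℕ) (t : ⨂[K]^m V) :
    0 ≤ tensorPowNorm K N m t := by
  rw [tensorPowNorm_eq_sInf_image]
  exact Real.sInf_nonneg (Set.forall_mem_image.2 fun a _ =>
    Finset.le_sup'_of_le _ (Finset.mem_univ 0) (Finset.prod_nonneg fun j _ => hN _))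

lemma tensorPowNorm_le_pow_mul {N N' : V → ℝ} (hN' : ∀ v, 0 ≤ N' v) {C : ℝ} (hC : 0 ≤ C)
    (h : ∀ v, N' v ≤ C * N v) (m : ℕ) (t : ⨂[K]^m V) :
    tensorPowNorm K N' m t ≤ C ^ m * tensorPowNorm K N m t := by
  simp only [tensorPowNorm_eq_sInf_image]
  refine sInf_image_le_mul_sInf_image
    (fun a _ => Finset.le_sup'_of_le _ (Finset.mem_univ 0) (Finset.prod_nonneg fun j _ => hN' _))
    (pow_nonneg hC m) fun a _ => Finset.sup'_le _ _ fun i _ => ?_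
  calc ∏ j, N' (a.2 i j) ≤ ∏ j, C * N (a.2 i j) :=
        Finset.prod_le_prod (fun j _ => hN' _) fun j _ => h _
    _ = C ^ m * ∏ j, N (a.2 i j) := by simp [Finset.prod_mul_distrib]
    _ ≤ C ^ m * Finset.univ.sup' Finset.univ_nonempty fun i => ∏ j, N (a.2 i j) := by
        gcongr
        exact Finset.le_sup' (fun i => ∏ j, N (a.2 i j)) (Finset.mem_univ i)

lemma tensorPowNorm_one_tprod {N : V → ℝ} (hN : IsNAnorm K N) (v : V) :
    tensorPowNorm K N 1 (tprod K fun _ => v) = N v := by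
  rw [tensorPowNorm_eq_sInf_image]
  have hv : (⟨0, fun _ _ => v⟩ : Σ n, Fin (n + 1) → Fin 1 → V) ∈
      {a | tprod K (fun _ => v) = ∑ i, tprod K (a.2 i)} := by
    simp
  refine le_antisymm ((csInf_le ⟨0, Set.forall_mem_image.2 fun a _ => ?_⟩
    (Set.mem_image_of_mem _ hv)).trans_eq (by simp)) ?_
  · exact Finset.le_sup'_of_le _ (Finset.mem_univ 0) (Finset.prod_nonneg fun j _ => hN.nonneg _)
  refine le_csInf ⟨_, Set.mem_image_of_mem _ hv⟩ (Set.forall_mem_image.2 fun a (ha : _ = _) => ?_)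
  have hsum : v = ∑ i, a.2 i 0 := by
    simpa using congrArg (subsingletonEquiv (R := K) (0 : Fin 1)) ha
  rw [hsum]
  simpa using hN.isNonarchimedean.apply_sum_le_sup Finset.univ_nonempty

end tensorPowNorm

section quotients

variable {K V W : Type*} [NormedField K] [AddCommGroup V] [Module K V] [AddCommGroup W]
  [Module K W] {N N' : V → ℝ}

lemma dInfty_quotNorm_tensorPowNorm_le [CompleteSpace K] [FiniteDimensional K V]
    (hN : IsNAnorm K N) (hN' : IsNAnorm K N') {m : ℕ} (π : (⨂[K]^m V) →ₗ[K] W) :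
    dInfty (quotNorm π (tensorPowNorm K N m)) (quotNorm π (tensorPowNorm K N' m))
      ≤ m * dInfty N N' := by
  have hexp (M M' : V → ℝ) : Real.exp (m * dInfty M M') = Real.exp (dInfty M M') ^ m :=
    Real.exp_nat_mul _ m
  refine dInfty_le_of_le_exp_mul (mul_nonneg m.cast_nonneg (dInfty_nonneg N N'))
    (quotNorm_nonneg π (tensorPowNorm_nonneg hN.nonneg m))
    (quotNorm_nonneg π (tensorPowNorm_nonneg hN'.nonneg m)) (fun x => ?_) fun x => ?_
  · rw [hexp]
    exact quotNorm_le_mul π (tensorPowNorm_nonneg hN'.nonneg m) (by positivity)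
      (tensorPowNorm_le_pow_mul hN'.nonneg (by positivity) (hN.le_exp_dInfty_mul hN') m) x
  · rw [dInfty_comm, hexp]
    exact quotNorm_le_mul π (tensorPowNorm_nonneg hN.nonneg m) (by positivity)
      (tensorPowNorm_le_pow_mul hN.nonneg (by positivity) (hN'.le_exp_dInfty_mul hN) m) x

lemma quotNorm_tensorPowNorm_one (hN : IsNAnorm K N) (π : (⨂[K]^1 V) →ₗ[K] W) (e : V ≃ₗ[K] W)
    (he : ∀ v : Fin 1 → V, π (tprod K v) = e (v 0)) :
    quotNorm π (tensorPowNorm K N 1) = N ∘ e.symm := by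
  have hπ : π = ((subsingletonEquiv (0 : Fin 1)).trans e : (⨂[K]^1 V) ≃ₗ[K] W) := by
    ext v
    simp [he]
  ext x
  simp [hπ, quotNorm_linearEquiv, tensorPowNorm_one_tprod hN]

end quotients

theorem dInfty_of_quotients_of_tensor_powers_general
    (K V : Type*) [NormedField K] [CompleteSpace K]
    [AddCommGroup V] [Module K V] [FiniteDimensional K V]
    (W : ℕ → Type*) [∀ m, AddCommGroup (W m)] [∀ m, Module K (W m)]
    (π : ∀ m, (⨂[K]^m V) →ₗ[K] W m)
    (e : V ≃ₗ[K] W 1)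
    (he : ∀ v : Fin 1 → V, π 1 (PiTensorProduct.tprod K v) = e (v 0))
    (N N' : V → ℝ) (hN : IsNAnorm K N) (hN' : IsNAnorm K N') :
    (∀ m, 1 ≤ m →
      dInfty (quotNorm (π m) (tensorPowNorm K N m)) (quotNorm (π m) (tensorPowNorm K N' m))
        ≤ (m : ℝ) * dInfty N N') ∧
    sSup {r | ∃ m : ℕ, 1 ≤ m ∧
        r = (m : ℝ)⁻¹ *
          dInfty (quotNorm (π m) (tensorPowNorm K N m)) (quotNorm (π m) (tensorPowNorm K N' m))}
      = dInfty N N' := by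
  have hle (m : ℕ) := dInfty_quotNorm_tensorPowNorm_le hN hN' (π m)
  have hone : dInfty (quotNorm (π 1) (tensorPowNorm K N 1))
      (quotNorm (π 1) (tensorPowNorm K N' 1)) = dInfty N N' := by
    rw [quotNorm_tensorPowNorm_one hN (π 1) e he, quotNorm_tensorPowNorm_one hN' (π 1) e he]
    exact dInfty_comp_addEquiv e.symm.toAddEquiv N N'
  refine ⟨fun m _ => hle m, IsGreatest.csSup_eq ⟨⟨1, le_rfl, by simp [hone]⟩, ?_⟩⟩
  rintro _ ⟨m, hm, rfl⟩
  rw [inv_mul_le_iff₀ (by exact_mod_cast hm)]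
  exact hle m

/-- quotient norms of tensor power norms along surjections `π_m : V^{⊗m} → W_m`
(with `W_1 = V`, `π_1 = id`, encoded through a linear equivalence `e : V ≃ W 1`) satisfy
`d_∞(N_m, N'_m) ≤ m · d_∞(N, N')`, and consequently
`sup_{m ≥ 1} m⁻¹ · d_∞(N_m, N'_m) = d_∞(N, N')`. -/
theorem dInfty_of_quotients_of_tensor_powers
    (K V : Type*) [NormedField K] [IsUltrametricDist K] [CompleteSpace K]
    [AddCommGroup V] [Module K V] [FiniteDimensional K V]
    (W : ℕ → Type*) [∀ m, AddCommGroup (W m)] [∀ m, Module K (W m)]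
    (π : ∀ m, (⨂[K]^m V) →ₗ[K] W m)
    (hsurj : ∀ m, 1 ≤ m → Function.Surjective (π m))
    (e : V ≃ₗ[K] W 1)
    (he : ∀ v : Fin 1 → V, π 1 (PiTensorProduct.tprod K v) = e (v 0))
    (N N' : V → ℝ) (hN : IsNAnorm K N) (hN' : IsNAnorm K N') :
    (∀ m, 1 ≤ m →
      dInfty (quotNorm (π m) (tensorPowNorm K N m)) (quotNorm (π m) (tensorPowNorm K N' m))
        ≤ (m : ℝ) * dInfty N N') ∧
    sSup {r | ∃ m : ℕ, 1 ≤ m ∧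
        r = (m : ℝ)⁻¹ *
          dInfty (quotNorm (π m) (tensorPowNorm K N m)) (quotNorm (π m) (tensorPowNorm K N' m))}
      = dInfty N N' :=
  dInfty_of_quotients_of_tensor_powers_general K V W π e he N N' hN hN'
end

section
/- Let d ≥ 1 and let Γ ⊆ ℕ^{1+d} be an admissible graded subsemigroup. For each integer k ≥ 1, let Γ^k ⊆ ℕ^{1+d} be a graded subsemigroup whose graded pieces Γ^k_r = {α ∈ ℕ^d : (r,α) ∈ Γ^k} satisfy Γ^k_1 = Γ_k and Γ^k_r ⊆ Γ_{kr} for all r ≥ 1. Then k^{-d}·vol(Δ(Γ^k)) converges to vol(Δ(Γ)) as k → ∞. -/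
/-!
Write `Δ_m = m⁻¹ • conv(Γ_m)` (`rescaledHull Γ m`). Since `Γ^k_1 = Γ_k` and
`Γ^k_r ⊆ Γ_{kr}`, we have `Δ_k ⊆ k⁻¹ • Δ(Γ^k) ⊆ Δ(Γ)`; the second inclusion needs
that `Γ^k` has no nonzero point of degree `0`, which linear growth forces as soon as
`Γ_k ≠ ∅`. So it suffices that `vol Δ_k → vol Δ(Γ)`. The sets `Δ_m` increase along
multiples, and `Δ(Γ)` lies in the closure of their convex union, so
`sup_m vol Δ_m ≥ vol Δ(Γ)`. Conversely every large degree occurs in `Γ`, so writing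
`k = a k₀ + r` with `r` bounded, `Δ_k` contains a translate of `(a k₀ / k) • Δ_{k₀}`,
whence `liminf vol Δ_k ≥ vol Δ_{k₀}`.
-/

open scoped BigOperators
open Filter MeasureTheory

/-- Points of `ℕ^{1+d}`, written as a degree together with a vector in `ℕ^d`. -/
abbrev NPt (d : ℕ) := ℕ × (Fin d → ℕ)

/-- A subset of `ℕ^{1+d}` is a (graded) subsemigroup if it is closed under addition. -/
def IsGradedSubsemigroup {d : ℕ} (Γ : Set (NPt d)) : Prop :=
  ∀ x ∈ Γ, ∀ y ∈ Γ, x + y ∈ Γ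

/-- Linear growth: there is `C > 0` with `|α|₁ ≤ C·m` for all `(m, α) ∈ Γ`. -/
def HasLinearGrowth {d : ℕ} (Γ : Set (NPt d)) : Prop :=
  ∃ C : ℝ, 0 < C ∧ ∀ p ∈ Γ, (∑ i, (p.2 i : ℝ)) ≤ C * p.1

/-- The canonical embedding `ℕ^{1+d} → ℤ^{1+d}`. -/
def nptToInt {d : ℕ} (p : NPt d) : ℤ × (Fin d → ℤ) :=
  ((p.1 : ℤ), fun i => (p.2 i : ℤ))

/-- `Γ` generates `ℤ^{1+d}` as a group. -/
def GeneratesFullLattice {d : ℕ} (Γ : Set (NPt d)) : Prop :=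
  AddSubgroup.closure (nptToInt '' Γ) = ⊤

/-- An admissible graded subsemigroup of `ℕ^{1+d}`. -/
def IsAdmissible {d : ℕ} (Γ : Set (NPt d)) : Prop :=
  IsGradedSubsemigroup Γ ∧ HasLinearGrowth Γ ∧ GeneratesFullLattice Γ

/-- The canonical embedding `ℕ^{1+d} → ℝ^{1+d}`. -/
def nptToReal {d : ℕ} (p : NPt d) : ℝ × (Fin d → ℝ) :=
  ((p.1 : ℝ), fun i => (p.2 i : ℝ))

/-- The convex cone generated by a subset `S` of a real vector space: the set of finite
nonnegative linear combinations of elements of `S`. -/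
def coneGen {E : Type*} [AddCommMonoid E] [Module ℝ E] (S : Set E) : Set E :=
  {y | ∃ (n : ℕ) (c : Fin n → ℝ) (p : Fin n → E),
    (∀ i, 0 ≤ c i) ∧ (∀ i, p i ∈ S) ∧ y = ∑ i, c i • p i}

/-- The Okounkov body of a subset `Σ ⊆ ℕ^{1+d}`: the slice at height `1` of the closed convex
cone generated by `Σ` in `ℝ^{1+d}`. -/
def okounkovBody {d : ℕ} (S : Set (NPt d)) : Set (Fin d → ℝ) :=
  {x | ((1 : ℝ), x) ∈ closure (coneGen (nptToReal '' S))}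

/-- The graded piece `Γ_m` of `Γ ⊆ ℕ^{1+d}`. -/
def gradedPiece {d : ℕ} (Γ : Set (NPt d)) (m : ℕ) : Set (Fin d → ℕ) :=
  {α | (m, α) ∈ Γ}

/-- The superlevel semigroup `Γ^{Φ,≥t}` of a function `Φ` on `Γ`. -/
def superlevel {d : ℕ} (Γ : Set (NPt d)) (Φ : NPt d → ℝ) (t : ℝ) : Set (NPt d) :=
  {p ∈ Γ | p.1 * t ≤ Φ p}

/-- `θ = limsup_{n → ∞} sup_{α ∈ Γ_n} Φ(n,α)/n`. -/
noncomputable def thetaSup {d : ℕ} (Γ : Set (NPt d)) (Φ : NPt d → ℝ) : ℝ :=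
  Filter.limsup (fun n : ℕ => sSup {r | ∃ α, (n, α) ∈ Γ ∧ r = Φ (n, α) / n}) Filter.atTop

open Set Topology Pointwise

section ConeHull

variable {E : Type*} [AddCommGroup E] [Module ℝ E]

theorem coneGen_eq_hull (S : Set E) : coneGen S = PointedCone.hull ℝ S := by
  ext y
  simp only [coneGen, mem_ofPred_eq, SetLike.mem_coe, Submodule.mem_span_set']
  constructor
  · rintro ⟨n, c, p, hc, hp, rfl⟩
    exact ⟨n, fun i => ⟨c i, hc i⟩, fun i => ⟨p i, hp i⟩, rfl⟩
  · rintro ⟨n, c, p, rfl⟩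
    exact ⟨n, fun i => c i, fun i => p i, fun i => (c i).2, fun i => (p i).2, rfl⟩

theorem Convex.inv_smul_snd_mem_of_mem_hull {W : Set E} (hW : Convex ℝ W) {p : ℝ × E}
    (hp : p ∈ PointedCone.hull ℝ ({1} ×ˢ W)) (hp₁ : 0 < p.1) : p.1⁻¹ • p.2 ∈ W := by
  obtain ⟨n, c, q, rfl⟩ := Submodule.mem_span_set'.mp hp
  have hq₁ : ∀ i, (q i : ℝ × E).1 = 1 := fun i => (q i).2.1
  have hmass : (∑ i, c i • (q i : ℝ × E)).1 = ∑ i, (c i : ℝ) := by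
    simp [Prod.fst_sum, hq₁, ← Nonneg.coe_smul]
  rw [hmass] at hp₁ ⊢
  simpa [Finset.centerMass, Prod.snd_sum] using
    hW.centerMass_mem (t := Finset.univ) (fun i _ => (c i).2) hp₁ (fun i _ => (q i).2.2)

end ConeHull

section ConvexMeasure

variable {E : Type*} [NormedAddCommGroup E] [NormedSpace ℝ E] [FiniteDimensional ℝ E]

theorem Convex.interior_closure_subset {W : Set E} (hW : Convex ℝ W) :
    interior (closure W) ⊆ W := by
  rcases (interior W).eq_empty_or_nonempty with hempty | hne
  · suffices interior (closure W) = ∅ by simp [this]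
    by_contra hcl
    have hspan := hW.closure.interior_nonempty_iff_affineSpan_eq_top.mp
      (nonempty_iff_ne_empty.mpr hcl)
    have : affineSpan ℝ W = ⊤ := top_unique <| hspan ▸ affineSpan_le.mpr
      (closure_minimal (subset_affineSpan ℝ W) (affineSpan ℝ W).closed_of_finiteDimensional)
    simp [hW.interior_nonempty_iff_affineSpan_eq_top.mpr this |>.ne_empty] at hempty
  · rw [hW.interior_closure_eq_interior_of_nonempty_interior hne]
    exact interior_subset

theorem Convex.addHaar_closure_le [MeasurableSpace E] [BorelSpace E] (μ : Measure E)
    [μ.IsAddHaarMeasure] {W : Set E} (hW : Convex ℝ W) : μ (closure W) ≤ μ W :=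
  calc μ (closure W) = μ (closure W \ frontier (closure W)) :=
        (measure_sdiff_null (hW.closure.addHaar_frontier μ)).symm
    _ = μ (interior (closure W)) := by rw [self_sdiff_frontier]
    _ ≤ μ W := measure_mono hW.interior_closure_subset

end ConvexMeasure

section GradedSemigroup

variable {d : ℕ}

def castVec (α : Fin d → ℕ) : Fin d → ℝ := fun i => (α i : ℝ)

@[simp]
theorem castVec_apply (α : Fin d → ℕ) (i : Fin d) : castVec α i = α i := rfl

theorem castVec_add (α β : Fin d → ℕ) : castVec (α + β) = castVec α + castVec β := by
  ext i; simp

@[simp]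
theorem castVec_zero : castVec (0 : Fin d → ℕ) = 0 := by
  ext i; simp

theorem nptToReal_eq (p : NPt d) : nptToReal p = ((p.1 : ℝ), castVec p.2) := rfl

theorem volume_smul_of_nonneg {t : ℝ} (ht : 0 ≤ t) (s : Set (Fin d → ℝ)) :
    volume (t • s) = ENNReal.ofReal (t ^ d) * volume s := by
  rw [Measure.addHaar_smul_of_nonneg volume ht, Module.finrank_fin_fun]

theorem eq_zero_of_mem_degree_zero {S : Set (NPt d)} (hS : IsGradedSubsemigroup S) {m : ℕ}
    {α₀ : Fin d → ℕ} (hα₀ : (m, α₀) ∈ S) {B : ℝ}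
    (hB : ∀ α, (m, α) ∈ S → ∑ i, (α i : ℝ) ≤ B)
    {β : Fin d → ℕ} (hβ : (0, β) ∈ S) : β = 0 := by
  have hmem : ∀ n : ℕ, (m, α₀ + n • β) ∈ S := by
    intro n
    induction n with
    | zero => simpa using hα₀
    | succ n ih =>
      have := hS _ ih _ hβ
      rwa [Prod.mk_add_mk, add_zero, add_assoc, ← succ_nsmul] at this
  by_contra hβ0
  obtain ⟨j, hj⟩ := Function.ne_iff.mp hβ0
  obtain ⟨n, hn⟩ := exists_nat_gt B
  have hjn : (n : ℝ) ≤ ((α₀ + n • β) j : ℕ) := by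
    have : 1 ≤ β j := Nat.one_le_iff_ne_zero.mpr hj
    exact_mod_cast (show n ≤ α₀ j + n * β j by nlinarith)
  have := hjn.trans ((Finset.single_le_sum (fun i _ => Nat.cast_nonneg _)
    (Finset.mem_univ j)).trans (hB _ (hmem n)))
  linarith

section OkounkovBody

variable {S : Set (NPt d)}

theorem convex_okounkovBody (S : Set (NPt d)) : Convex ℝ (okounkovBody S) := by
  intro x hx y hy a b ha hb hab
  have hconv : Convex ℝ (coneGen (nptToReal '' S)) := by
    rw [coneGen_eq_hull]; exact PointedCone.convex _
  simpa [okounkovBody, Prod.smul_mk, Prod.mk_add_mk, hab] using hconv.closure hx hy ha hb hab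

theorem isClosed_okounkovBody (S : Set (NPt d)) : IsClosed (okounkovBody S) :=
  isClosed_closure.preimage (by fun_prop)

theorem inv_smul_mem_okounkovBody {t : ℝ} {y : Fin d → ℝ} (ht : 0 < t)
    (h : (t, y) ∈ closure (coneGen (nptToReal '' S))) : t⁻¹ • y ∈ okounkovBody S := by
  rw [coneGen_eq_hull] at h
  have := (PointedCone.hull ℝ (nptToReal '' S)).closure.smul_mem (inv_nonneg.2 ht.le) h
  simpa [okounkovBody, coneGen_eq_hull, Prod.smul_mk, inv_mul_cancel₀ ht.ne'] using this

theorem inv_smul_castVec_mem_okounkovBody {m : ℕ} {α : Fin d → ℕ} (hp : (m, α) ∈ S)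
    (hm : 0 < m) : (m : ℝ)⁻¹ • castVec α ∈ okounkovBody S :=
  inv_smul_mem_okounkovBody (by positivity) <| subset_closure <| by
    rw [coneGen_eq_hull]; exact PointedCone.subset_hull ⟨_, hp, rfl⟩

theorem okounkovBody_subset_closure {W : Set (Fin d → ℝ)} (hW : Convex ℝ W)
    (hzero : ∀ β, (0, β) ∈ S → β = 0)
    (hS : ∀ m α, (m, α) ∈ S → 0 < m → (m : ℝ)⁻¹ • castVec α ∈ W) :
    okounkovBody S ⊆ closure W := by
  have hcone : coneGen (nptToReal '' S) ⊆ PointedCone.hull ℝ ({(1 : ℝ)} ×ˢ W) := by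
    rw [coneGen_eq_hull]
    refine Submodule.span_le.mpr ?_
    rintro _ ⟨⟨m, α⟩, hp, rfl⟩
    rcases Nat.eq_zero_or_pos m with rfl | hm
    · rw [hzero α hp, nptToReal_eq, castVec_zero, Nat.cast_zero, Prod.mk_zero_zero]
      exact zero_mem _
    · have hsmul :
          nptToReal (m, α) = (m : ℝ) • ((1 : ℝ), (m : ℝ)⁻¹ • castVec α) := by
        simp [nptToReal_eq, Prod.smul_mk, smul_inv_smul₀ (show (m : ℝ) ≠ 0 by positivity)]
      rw [hsmul]
      exact PointedCone.smul_mem _ (by positivity)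
        (PointedCone.subset_hull ⟨rfl, hS m α hp hm⟩)
  intro x hx
  have hxU : ((1 : ℝ), x) ∈ closure ({p | 0 < p.1} ∩ coneGen (nptToReal '' S)) :=
    (isOpen_lt continuous_const continuous_fst).inter_closure ⟨by simp, hx⟩
  have hcont : ContinuousAt (fun p : ℝ × (Fin d → ℝ) => p.1⁻¹ • p.2) (1, x) := by
    fun_prop (disch := simp)
  refine closure_mono ?_ (by simpa using hcont.continuousWithinAt.mem_closure_image hxU)
  rintro _ ⟨p, ⟨hp₁, hp⟩, rfl⟩
  exact hW.inv_smul_snd_mem_of_mem_hull (hcone hp) hp₁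

theorem okounkovBody_subset_pi_Icc (hS : IsGradedSubsemigroup S) {C : ℝ}
    (hC : ∀ p ∈ S, ∑ i, (p.2 i : ℝ) ≤ C * p.1) :
    okounkovBody S ⊆ univ.pi fun _ => Icc 0 C := by
  have hbox : IsClosed (univ.pi fun _ : Fin d => Icc (0 : ℝ) C) :=
    isClosed_set_pi fun _ _ => isClosed_Icc
  refine (okounkovBody_subset_closure (convex_pi fun _ _ => convex_Icc 0 C)
    (fun β hβ => eq_zero_of_mem_degree_zero hS hβ (fun α hα => by simpa using hC _ hα) hβ)
    ?_).trans hbox.closure_subset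
  intro m α hp hm i _
  have hαi : (α i : ℝ) ≤ C * m := (Finset.single_le_sum (fun j _ => Nat.cast_nonneg (α j))
    (Finset.mem_univ i)).trans (hC _ hp)
  have hm' : (0 : ℝ) < m := by exact_mod_cast hm
  simp only [Pi.smul_apply, castVec_apply, smul_eq_mul, mem_Icc]
  exact ⟨by positivity, by rw [inv_mul_le_iff₀ hm']; linarith⟩

theorem volume_okounkovBody_lt_top (hS : IsGradedSubsemigroup S) {C : ℝ}
    (hC : ∀ p ∈ S, ∑ i, (p.2 i : ℝ) ≤ C * p.1) : volume (okounkovBody S) < ⊤ :=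
  (measure_mono (okounkovBody_subset_pi_Icc hS hC)).trans_lt
    (isCompact_univ_pi fun _ => isCompact_Icc).measure_lt_top

end OkounkovBody

section Hulls

variable {S : Set (NPt d)}

def pieceHull (S : Set (NPt d)) (m : ℕ) : Set (Fin d → ℝ) :=
  convexHull ℝ (castVec '' gradedPiece S m)

def rescaledHull (S : Set (NPt d)) (m : ℕ) : Set (Fin d → ℝ) :=
  (m : ℝ)⁻¹ • pieceHull S m

theorem convex_rescaledHull (S : Set (NPt d)) (m : ℕ) : Convex ℝ (rescaledHull S m) :=
  (convex_convexHull ℝ _).smul _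

theorem rescaledHull_subset_okounkovBody {m : ℕ} (hm : 0 < m) :
    rescaledHull S m ⊆ okounkovBody S := by
  rw [rescaledHull, pieceHull, ← convexHull_smul]
  refine convexHull_min ?_ (convex_okounkovBody S)
  rintro _ ⟨_, ⟨α, hα, rfl⟩, rfl⟩
  exact inv_smul_castVec_mem_okounkovBody hα hm

theorem pieceHull_add_subset (hS : IsGradedSubsemigroup S) (m n : ℕ) :
    pieceHull S m + pieceHull S n ⊆ pieceHull S (m + n) := by
  rw [pieceHull, pieceHull, ← convexHull_add]
  refine convexHull_mono ?_
  rintro _ ⟨_, ⟨α, hα, rfl⟩, _, ⟨β, hβ, rfl⟩, rfl⟩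
  exact ⟨α + β, hS _ hα _ hβ, castVec_add α β⟩

theorem natCast_smul_pieceHull_subset (hS : IsGradedSubsemigroup S) {a : ℕ} (ha : 0 < a)
    (m : ℕ) : (a : ℝ) • pieceHull S m ⊆ pieceHull S (a * m) := by
  induction a, ha using Nat.le_induction with
  | base => simp
  | succ a ha ih =>
    calc ((a + 1 : ℕ) : ℝ) • pieceHull S m
        ⊆ (a : ℝ) • pieceHull S m + (1 : ℝ) • pieceHull S m := by
          push_cast; exact add_smul_subset _ _ _
      _ ⊆ pieceHull S (a * m) + pieceHull S m := by
          rw [one_smul]; exact add_subset_add_right ih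
      _ ⊆ pieceHull S ((a + 1) * m) := by
          rw [add_one_mul]; exact pieceHull_add_subset hS _ _

theorem rescaledHull_subset_rescaledHull_mul (hS : IsGradedSubsemigroup S) {c : ℕ} (hc : 0 < c)
    (m : ℕ) :
    rescaledHull S m ⊆ rescaledHull S (c * m) :=
  calc rescaledHull S m = ((c * m : ℕ) : ℝ)⁻¹ • (c : ℝ) • pieceHull S m := by
        rw [rescaledHull, smul_smul, Nat.cast_mul, mul_inv_rev,
          inv_mul_cancel_right₀ (by positivity)]
    _ ⊆ rescaledHull S (c * m) := smul_set_mono (natCast_smul_pieceHull_subset hS hc m)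

theorem le_volume_rescaledHull_mul_add (hS : IsGradedSubsemigroup S) {a m r : ℕ} (ha : 0 < a)
    (hm : 0 < m) (hr : (gradedPiece S r).Nonempty) :
    ENNReal.ofReal ((((a * m : ℕ) : ℝ) / (a * m + r : ℕ)) ^ d) * volume (rescaledHull S m) ≤
      volume (rescaledHull S (a * m + r)) := by
  obtain ⟨β, hβ⟩ := hr
  have hsub : castVec β +ᵥ (a : ℝ) • pieceHull S m ⊆ pieceHull S (a * m + r) := by
    rintro _ ⟨y, hy, rfl⟩
    show castVec β + y ∈ _
    rw [add_comm (castVec β)]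
    exact pieceHull_add_subset hS _ _ (add_mem_add (natCast_smul_pieceHull_subset hS ha m hy)
      (subset_convexHull ℝ _ ⟨β, hβ, rfl⟩))
  have hpiece : pieceHull S m = (m : ℝ) • rescaledHull S m := by
    rw [rescaledHull, smul_inv_smul₀ (by positivity)]
  calc ENNReal.ofReal ((((a * m : ℕ) : ℝ) / (a * m + r : ℕ)) ^ d) * volume (rescaledHull S m)
      = ENNReal.ofReal (((a * m + r : ℕ) : ℝ)⁻¹ ^ d) *
          (ENNReal.ofReal ((a : ℝ) ^ d) * (ENNReal.ofReal ((m : ℝ) ^ d) *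
            volume (rescaledHull S m))) := by
        rw [← mul_assoc, ← mul_assoc, ← ENNReal.ofReal_mul (by positivity),
          ← ENNReal.ofReal_mul (by positivity)]
        congr 2
        push_cast
        ring
    _ = volume (((a * m + r : ℕ) : ℝ)⁻¹ •
          (castVec β +ᵥ (a : ℝ) • pieceHull S m)) := by
        rw [volume_smul_of_nonneg (by positivity), measure_vadd,
          volume_smul_of_nonneg (by positivity), hpiece, volume_smul_of_nonneg (by positivity)]
    _ ≤ volume (rescaledHull S (a * m + r)) := measure_mono (smul_set_mono hsub)

theorem eventually_lt_volume_rescaledHull (hS : IsGradedSubsemigroup S) {N : ℕ}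
    (hN : ∀ m, N ≤ m → (gradedPiece S m).Nonempty) {k₀ : ℕ} (hk₀ : 0 < k₀)
    {b : ENNReal} (hb : b < volume (rescaledHull S k₀)) :
    ∀ᶠ k in atTop, b < volume (rescaledHull S k) := by
  set c : ℝ := N + k₀
  have hlim : Tendsto
      (fun k : ℕ => ENNReal.ofReal ((1 - c / k) ^ d) * volume (rescaledHull S k₀)) atTop
      (𝓝 (volume (rescaledHull S k₀))) := by
    have : Tendsto (fun k : ℕ => (1 - c / k) ^ d) atTop (𝓝 1) := by
      simpa using ((tendsto_const_div_atTop_nhds_zero_nat c).const_sub 1).pow d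
    simpa using ENNReal.Tendsto.mul_const (ENNReal.tendsto_ofReal this) (Or.inl (by simp))
  filter_upwards [hlim.eventually (eventually_gt_nhds hb), eventually_ge_atTop (N + k₀)]
    with k hbk hk
  obtain ⟨a, r, rfl, ha, hNr, hrc⟩ :
      ∃ a r, k = a * k₀ + r ∧ 0 < a ∧ N ≤ r ∧ r < N + k₀ := by
    have := Nat.div_add_mod' (k - N) k₀
    have := Nat.mod_lt (k - N) hk₀
    exact ⟨(k - N) / k₀, N + (k - N) % k₀, by omega, Nat.div_pos (by omega) hk₀, by omega,
      by omega⟩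
  refine hbk.trans_le (le_trans ?_ (le_volume_rescaledHull_mul_add hS ha hk₀ (hN r hNr)))
  have hkpos : (0 : ℝ) < (a * k₀ + r : ℕ) := by positivity
  gcongr
  · rw [sub_nonneg, div_le_one hkpos]
    simp only [c]
    exact_mod_cast hk
  · rw [one_sub_div hkpos.ne', div_le_div_iff_of_pos_right hkpos]
    have : (r : ℝ) ≤ c := by simp only [c]; exact_mod_cast hrc.le
    push_cast
    linarith

end Hulls

section Degrees

variable {S : Set (NPt d)}

theorem setGcd_image_fst_eq_one (hgen : GeneratesFullLattice S) :
    Nat.setGcd (Prod.fst '' S) = 1 := by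
  set g := Nat.setGcd (Prod.fst '' S)
  have hle : AddSubgroup.closure (nptToInt '' S) ≤
      (AddSubgroup.zmultiples (g : ℤ)).comap (AddMonoidHom.fst ℤ (Fin d → ℤ)) := by
    rw [AddSubgroup.closure_le]
    rintro _ ⟨p, hp, rfl⟩
    simp only [SetLike.mem_coe, AddSubgroup.mem_comap, AddMonoidHom.coe_fst, nptToInt,
      Int.mem_zmultiples_iff]
    exact Int.natCast_dvd_natCast.mpr (Nat.setGcd_dvd_of_mem ⟨p, hp, rfl⟩)
  rw [hgen] at hle
  have hdvd : (g : ℤ) ∣ 1 :=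
    Int.mem_zmultiples_iff.mp (hle (AddSubgroup.mem_top ((1 : ℤ), 0)))
  exact_mod_cast Int.eq_one_of_dvd_one (by positivity) hdvd

-- The degrees of `S` form a numerical semigroup of gcd one, so they contain every large integer.
theorem eventually_gradedPiece_nonempty (hS : IsGradedSubsemigroup S)
    (hgen : GeneratesFullLattice S) : ∀ᶠ m in atTop, (gradedPiece S m).Nonempty := by
  obtain ⟨n, hn⟩ := Nat.exists_mem_closure_of_ge (Prod.fst '' S)
  have hclosure : ∀ m ∈ AddSubmonoid.closure (Prod.fst '' S),
      m = 0 ∨ (gradedPiece S m).Nonempty := by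
    intro m hm
    induction hm using AddSubmonoid.closure_induction with
    | mem m hm =>
      obtain ⟨p, hp, rfl⟩ := hm
      exact Or.inr ⟨p.2, hp⟩
    | zero => exact Or.inl rfl
    | add m m' _ _ h h' =>
      rcases h with rfl | ⟨α, hα⟩
      · simpa using h'
      rcases h' with rfl | ⟨β, hβ⟩
      · exact Or.inr ⟨α, hα⟩
      · exact Or.inr ⟨α + β, hS _ hα _ hβ⟩
  filter_upwards [eventually_ge_atTop (max n 1)] with m hm
  refine (hclosure m (hn m (le_of_max_le_left hm) ?_)).resolve_left (by omega)
  rw [setGcd_image_fst_eq_one hgen]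
  exact one_dvd m

end Degrees

section Limit

variable {S : Set (NPt d)}

-- `Δ(S)` lies in the closure of the convex set `⋃ m, rescaledHull S m`, whose frontier is null.
theorem volume_okounkovBody_le_iSup (hS : IsGradedSubsemigroup S) {C : ℝ}
    (hC : ∀ p ∈ S, ∑ i, (p.2 i : ℝ) ≤ C * p.1) :
    volume (okounkovBody S) ≤ ⨆ k : ℕ, volume (rescaledHull S (k + 1)) := by
  have hdir : Directed (· ⊆ ·) fun k : ℕ => rescaledHull S (k + 1) := by
    intro i j
    refine ⟨i * j + i + j, ?_, ?_⟩
    · convert rescaledHull_subset_rescaledHull_mul hS (by positivity : 0 < j + 1) (i + 1) using 2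
      ring
    · convert rescaledHull_subset_rescaledHull_mul hS (by positivity : 0 < i + 1) (j + 1) using 2
      ring
  have hW : Convex ℝ (⋃ k : ℕ, rescaledHull S (k + 1)) :=
    hdir.convex_iUnion fun k => convex_rescaledHull S (k + 1)
  have hsub : okounkovBody S ⊆ closure (⋃ k : ℕ, rescaledHull S (k + 1)) := by
    refine okounkovBody_subset_closure hW (fun β hβ =>
      eq_zero_of_mem_degree_zero hS hβ (fun α hα => by simpa using hC _ hα) hβ) ?_
    intro m α hp hm
    refine mem_iUnion.mpr ⟨m - 1, ?_⟩
    rw [Nat.sub_add_cancel hm]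
    exact smul_mem_smul_set (subset_convexHull ℝ _ ⟨α, hp, rfl⟩)
  calc volume (okounkovBody S) ≤ volume (closure (⋃ k : ℕ, rescaledHull S (k + 1))) :=
        measure_mono hsub
    _ ≤ volume (⋃ k : ℕ, rescaledHull S (k + 1)) := hW.addHaar_closure_le volume
    _ = ⨆ k : ℕ, volume (rescaledHull S (k + 1)) := hdir.measure_iUnion

theorem tendsto_volume_rescaledHull (hS : IsAdmissible S) :
    Tendsto (fun k => volume (rescaledHull S k)) atTop (𝓝 (volume (okounkovBody S))) := by
  obtain ⟨hadd, ⟨C, -, hC⟩, hgen⟩ := hS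
  obtain ⟨N, hN⟩ := eventually_atTop.mp (eventually_gradedPiece_nonempty hadd hgen)
  refine tendsto_order.mpr ⟨fun b hb => ?_, fun b hb => ?_⟩
  · obtain ⟨k, hk⟩ := lt_iSup_iff.mp (hb.trans_le (volume_okounkovBody_le_iSup hadd hC))
    exact eventually_lt_volume_rescaledHull hadd hN k.succ_pos hk
  · filter_upwards [eventually_gt_atTop 0] with k hk
    exact (measure_mono (rescaledHull_subset_okounkovBody hk)).trans_lt hb

end Limit

section Regraded

variable {Γ Γ' : Set (NPt d)} {k : ℕ}

theorem rescaledHull_subset_inv_smul_okounkovBody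
    (h1 : ∀ α, (1, α) ∈ Γ' ↔ (k, α) ∈ Γ) :
    rescaledHull Γ k ⊆ (k : ℝ)⁻¹ • okounkovBody Γ' := by
  have hpiece : pieceHull Γ k = rescaledHull Γ' 1 := by
    simp only [rescaledHull, pieceHull, gradedPiece, h1, Nat.cast_one, inv_one, one_smul]
  rw [rescaledHull, hpiece]
  exact smul_set_mono (rescaledHull_subset_okounkovBody one_pos)

theorem inv_smul_okounkovBody_subset (hk : 0 < k) (hzero : ∀ β, (0, β) ∈ Γ' → β = 0)
    (hr : ∀ r, 1 ≤ r → ∀ α, (r, α) ∈ Γ' → (k * r, α) ∈ Γ) :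
    (k : ℝ)⁻¹ • okounkovBody Γ' ⊆ okounkovBody Γ := by
  let φ : (ℝ × (Fin d → ℝ)) →L[ℝ] ℝ × (Fin d → ℝ) :=
    ((k : ℝ) • ContinuousLinearMap.fst ℝ ℝ (Fin d → ℝ)).prod
      (ContinuousLinearMap.snd ℝ ℝ _)
  have hφ : ∀ p, φ p = ((k : ℝ) * p.1, p.2) := fun p => rfl
  have hcone : MapsTo φ (coneGen (nptToReal '' Γ')) (coneGen (nptToReal '' Γ)) := by
    rw [coneGen_eq_hull, coneGen_eq_hull]
    suffices PointedCone.hull ℝ (nptToReal '' Γ') ≤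
        (PointedCone.hull ℝ (nptToReal '' Γ)).comap (φ : _ →ₗ[ℝ] _) from
      fun _ hp => this hp
    refine Submodule.span_le.mpr ?_
    rintro _ ⟨⟨r, α⟩, hp, rfl⟩
    rcases Nat.eq_zero_or_pos r with rfl | hr0
    · have hφ0 : φ (nptToReal (0, α)) = 0 := by simp [hφ, nptToReal_eq, hzero α hp]
      show φ (nptToReal (0, α)) ∈ PointedCone.hull ℝ _
      rw [hφ0]
      exact zero_mem _
    · exact PointedCone.subset_hull ⟨(k * r, α), hr r hr0 α hp, by simp [hφ, nptToReal_eq]⟩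
  rintro _ ⟨x, hx, rfl⟩
  exact inv_smul_mem_okounkovBody (by positivity)
    (by simpa [hφ] using map_mem_closure φ.continuous hx hcone)

end Regraded

end GradedSemigroup

theorem vol_okounkov_of_regraded_tendsto_general
    (d : ℕ) (Γ : Set (NPt d)) (hΓ : IsAdmissible Γ)
    (Γk : ℕ → Set (NPt d))
    (hsemi : ∀ k, 1 ≤ k → IsGradedSubsemigroup (Γk k))
    (h1 : ∀ k, 1 ≤ k → ∀ α, (1, α) ∈ Γk k ↔ (k, α) ∈ Γ)
    (hr : ∀ k, 1 ≤ k → ∀ r, 1 ≤ r → ∀ α, (r, α) ∈ Γk k → (k * r, α) ∈ Γ) :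
    Filter.Tendsto
      (fun k : ℕ => ((k : ℝ) ^ d)⁻¹ * (volume (okounkovBody (Γk k))).toReal)
      Filter.atTop
      (nhds ((volume (okounkovBody Γ)).toReal)) := by
  obtain ⟨hadd, ⟨C, -, hC⟩, hgen⟩ := id hΓ
  have hzero : ∀ᶠ k in atTop, ∀ β, (0, β) ∈ Γk k → β = 0 := by
    filter_upwards [eventually_gradedPiece_nonempty hadd hgen, eventually_ge_atTop 1]
      with k ⟨α₀, hα₀⟩ hk β hβ
    exact eq_zero_of_mem_degree_zero (hsemi k hk) ((h1 k hk α₀).mpr hα₀)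
      (B := C * k) (fun α hα => hC _ ((h1 k hk α).mp hα)) hβ
  have hsqueeze : Tendsto (fun k : ℕ => volume ((k : ℝ)⁻¹ • okounkovBody (Γk k))) atTop
      (𝓝 (volume (okounkovBody Γ))) := by
    refine tendsto_of_tendsto_of_tendsto_of_le_of_le' (tendsto_volume_rescaledHull hΓ)
      tendsto_const_nhds ?_ ?_
    · filter_upwards [eventually_ge_atTop 1] with k hk
      exact measure_mono (rescaledHull_subset_inv_smul_okounkovBody (h1 k hk))
    · filter_upwards [hzero, eventually_ge_atTop 1] with k hzero hk
      exact measure_mono (inv_smul_okounkovBody_subset hk hzero (hr k hk))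
  refine ((ENNReal.tendsto_toReal (volume_okounkovBody_lt_top hadd hC).ne).comp hsqueeze).congr
    fun k => ?_
  rw [Function.comp_apply, volume_smul_of_nonneg (by positivity), ENNReal.toReal_mul,
    ENNReal.toReal_ofReal (by positivity), inv_pow]

/-- Theorem C (combinatorial form): if `Γ^k` are graded subsemigroups with `Γ^k_1 = Γ_k` and
`Γ^k_r ⊆ Γ_{kr}`, then `k^{-d}·vol(Δ(Γ^k)) → vol(Δ(Γ))` as `k → ∞`. -/
theorem vol_okounkov_of_regraded_tendsto
    (d : ℕ) (hd : 1 ≤ d) (Γ : Set (NPt d)) (hΓ : IsAdmissible Γ)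
    (Γk : ℕ → Set (NPt d))
    (hsemi : ∀ k, 1 ≤ k → IsGradedSubsemigroup (Γk k))
    (h1 : ∀ k, 1 ≤ k → ∀ α, (1, α) ∈ Γk k ↔ (k, α) ∈ Γ)
    (hr : ∀ k, 1 ≤ k → ∀ r, 1 ≤ r → ∀ α, (r, α) ∈ Γk k → (k * r, α) ∈ Γ) :
    Filter.Tendsto
      (fun k : ℕ => ((k : ℝ) ^ d)⁻¹ * (volume (okounkovBody (Γk k))).toReal)
      Filter.atTop
      (nhds ((volume (okounkovBody Γ)).toReal)) :=
  vol_okounkov_of_regraded_tendsto_general d Γ hΓ Γk hsemi h1 hr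
end

section
/- Let d ≥ 1, let Γ ⊆ ℕ^{1+d} be an admissible graded subsemigroup containing 0, and let Φ : Γ → ℝ be superadditive with Φ(0,0) = 0 and linearly bounded above, i.e. there is C > 0 with Φ(m,α) ≤ C·m on Γ. Set θ = limsup_{n→∞} sup_{α ∈ Γ_n} Φ(n,α)/n. Then for every real t < θ, the superlevel set Γ^{Φ,≥t} = {(m,α) ∈ Γ : Φ(m,α) ≥ m·t} is a graded subsemigroup of ℕ^{1+d} which has linear growth and generates ℤ^{1+d} as a group (i.e. is itself admissible). -/
open scoped BigOperators
open Filter MeasureTheory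

lemma nptToInt_zero' {d : ℕ} : nptToInt (0 : NPt d) = 0 := by
  simp only [nptToInt, Prod.ext_iff]
  exact ⟨by simp, funext fun i => by simp⟩

lemma nptToInt_add' {d : ℕ} (x y : NPt d) : nptToInt (x + y) = nptToInt x + nptToInt y := by
  simp only [nptToInt, Prod.ext_iff, Prod.fst_add, Prod.snd_add]
  refine ⟨by push_cast; ring, funext fun i => ?_⟩
  simp [Pi.add_apply]

/-- For a superadditive, linearly bounded above function `Φ` on an admissible graded
subsemigroup `Γ` containing `0`, with `Φ(0,0) = 0`, every superlevel set `Γ^{Φ,≥t}` with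
`t < θ` is an admissible graded subsemigroup of `ℕ^{1+d}`. -/
theorem superlevel_isAdmissible
    (d : ℕ) (hd : 1 ≤ d) (Γ : Set (NPt d)) (hΓ : IsAdmissible Γ)
    (h0 : (0 : NPt d) ∈ Γ)
    (Φ : NPt d → ℝ)
    (hsuper : ∀ x ∈ Γ, ∀ y ∈ Γ, Φ x + Φ y ≤ Φ (x + y))
    (hΦ0 : Φ 0 = 0)
    (hub : ∃ C : ℝ, 0 < C ∧ ∀ p ∈ Γ, Φ p ≤ C * p.1) :
    ∀ t : ℝ, t < thetaSup Γ Φ →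
      IsGradedSubsemigroup (superlevel Γ Φ t) ∧
      HasLinearGrowth (superlevel Γ Φ t) ∧
      GeneratesFullLattice (superlevel Γ Φ t) := by
  obtain ⟨hΓadd, ⟨Cg, hCg, hgrow⟩, hgen⟩ := hΓ
  obtain ⟨C, hC, hCle⟩ := hub
  -- iterated superadditivity
  have hsmul : ∀ (k : ℕ), ∀ x ∈ Γ, k • x ∈ Γ ∧ (k : ℝ) * Φ x ≤ Φ (k • x) := by
    intro k
    induction k with
    | zero => intro x hx; simpa [hΦ0] using h0
    | succ k ih =>
      intro x hx
      obtain ⟨hm, hv⟩ := ih x hx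
      refine ⟨by rw [succ_nsmul]; exact hΓadd _ hm _ hx, ?_⟩
      rw [succ_nsmul]
      calc ((k + 1 : ℕ) : ℝ) * Φ x = (k : ℝ) * Φ x + Φ x := by push_cast; ring
        _ ≤ Φ (k • x) + Φ x := by linarith
        _ ≤ Φ (k • x + x) := hsuper _ hm _ hx
  have hsmul_fst : ∀ (k : ℕ) (x : NPt d), (k • x).1 = k * x.1 := fun k x => by
    simp [smul_eq_mul]
  -- the difference subgroup of Γ
  set D : AddSubgroup (ℤ × (Fin d → ℤ)) :=
    { carrier := {g | ∃ u ∈ Γ, ∃ v ∈ Γ, g = nptToInt u - nptToInt v}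
      zero_mem' := ⟨0, h0, 0, h0, by simp⟩
      add_mem' := by
        rintro a b ⟨u, hu, v, hv, rfl⟩ ⟨u', hu', v', hv', rfl⟩
        exact ⟨u + u', hΓadd _ hu _ hu', v + v', hΓadd _ hv _ hv', by
          rw [nptToInt_add', nptToInt_add']; ring⟩
      neg_mem' := by
        rintro a ⟨u, hu, v, hv, rfl⟩
        exact ⟨v, hv, u, hu, by ring⟩ } with hDdef
  have himD : nptToInt '' Γ ⊆ D := by
    rintro _ ⟨u, hu, rfl⟩
    exact ⟨u, hu, 0, h0, by rw [nptToInt_zero', sub_zero]⟩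
  have h1D : ((1 : ℤ), (0 : Fin d → ℤ)) ∈ D := by
    have hle : AddSubgroup.closure (nptToInt '' Γ) ≤ D := (AddSubgroup.closure_le D).mpr himD
    rw [hgen] at hle
    exact hle (AddSubgroup.mem_top _)
  obtain ⟨u, hu, v, hv, huv⟩ := h1D
  have hdeg : u.1 = v.1 + 1 := by
    have h := congrArg Prod.fst huv
    simp only [nptToInt, Prod.fst_sub] at h
    omega
  have hu1 : 1 ≤ u.1 := by omega
  set s := v.1 with hs
  -- all sufficiently large degrees occur in Γ
  have hdeg_cof : ∀ n : ℕ, s * s ≤ n → ∃ α, (n, α) ∈ Γ := by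
    intro n hn
    rcases Nat.eq_zero_or_pos s with h0s | hpos
    · refine ⟨(n • u).2, ?_⟩
      have hmem : ((n • u).1, (n • u).2) ∈ Γ := (hsmul n u hu).1
      have hfst : (n • u).1 = n := by rw [hsmul_fst, hdeg, h0s]; omega
      rwa [hfst] at hmem
    · set q := n / s with hq'
      set r := n % s with hr'
      have hr : r < s := Nat.mod_lt _ hpos
      have hq : s ≤ q := (Nat.le_div_iff_mul_le hpos).mpr hn
      have hrq : r ≤ q := le_trans hr.le hq
      have hw : (q - r) • v + r • u ∈ Γ := hΓadd _ (hsmul (q - r) v hv).1 _ (hsmul r u hu).1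
      have hfst : ((q - r) • v + r • u).1 = n := by
        rw [Prod.fst_add, hsmul_fst, hsmul_fst, hdeg, ← hs]
        obtain ⟨e, he⟩ := Nat.exists_eq_add_of_le hrq
        have h3 : q - r = e := by omega
        have h4 : e * s + r * (s + 1) = q * s + r := by rw [he]; ring
        rw [h3, h4, mul_comm]
        exact Nat.div_add_mod n s
      refine ⟨((q - r) • v + r • u).2, ?_⟩
      have hw' : (((q - r) • v + r • u).1, ((q - r) • v + r • u).2) ∈ Γ := hw
      rwa [hfst] at hw'
  intro t ht
  -- the sequence of suprema
  set f : ℕ → ℝ := fun n => sSup {r | ∃ α, (n, α) ∈ Γ ∧ r = Φ (n, α) / n} with hf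
  have hbdd : ∀ n : ℕ, 1 ≤ n → BddAbove {r | ∃ α, (n, α) ∈ Γ ∧ r = Φ (n, α) / (n : ℝ)} := by
    intro n hn
    refine ⟨C, ?_⟩
    rintro r ⟨α, hα, rfl⟩
    have hnpos : (0 : ℝ) < n := by exact_mod_cast hn
    rw [div_le_iff₀ hnpos]
    exact hCle _ hα
  -- coboundedness of f
  have hcb : IsCoboundedUnder (· ≤ ·) atTop f := by
    apply Filter.IsCoboundedUnder.of_frequently_ge (a := Φ u / u.1)
    rw [frequently_atTop]
    intro N
    refine ⟨max N 1 * u.1, ?_, ?_⟩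
    · calc N ≤ max N 1 := le_max_left _ _
        _ = max N 1 * 1 := (mul_one _).symm
        _ ≤ max N 1 * u.1 := Nat.mul_le_mul_left _ hu1
    · set k := max N 1 with hk'
      have hk : 1 ≤ k := le_max_right _ _
      have hku : 1 ≤ k * u.1 := Nat.one_le_iff_ne_zero.mpr (by positivity)
      have hfstk : (k • u).1 = k * u.1 := hsmul_fst k u
      have hmem : Φ (k • u) / ((k * u.1 : ℕ) : ℝ) ∈
          {r | ∃ α, ((k * u.1 : ℕ), α) ∈ Γ ∧ r = Φ ((k * u.1 : ℕ), α) / ((k * u.1 : ℕ) : ℝ)} := by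
        refine ⟨(k • u).2, ?_, ?_⟩
        · rw [← hfstk]; exact (hsmul k u hu).1
        · rw [← hfstk]
      have hle2 : Φ u / (u.1 : ℝ) ≤ Φ (k • u) / ((k * u.1 : ℕ) : ℝ) := by
        have hu1R : (0 : ℝ) < u.1 := by exact_mod_cast hu1
        have hkR : (0 : ℝ) < k := by exact_mod_cast hk
        have h5 : (k : ℝ) * Φ u ≤ Φ (k • u) := (hsmul k u hu).2
        have h6 : ((k * u.1 : ℕ) : ℝ) = (k : ℝ) * u.1 := by push_cast; ring
        rw [h6]
        rw [div_le_div_iff₀ hu1R (by positivity)]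
        nlinarith
      exact le_trans hle2 (le_csSup (hbdd _ hku) hmem)
  have ht' : t < Filter.limsup f atTop := ht
  have hfreq : ∃ᶠ n in atTop, t < f n := frequently_lt_of_lt_limsup hcb ht'
  have hev : ∀ᶠ n in atTop, s * s ≤ n ∧ 1 ≤ n :=
    eventually_atTop.mpr ⟨s * s + 1, fun n hn => ⟨by omega, by omega⟩⟩
  obtain ⟨n, htn, hns, hn1⟩ := (hfreq.and_eventually hev).exists
  obtain ⟨α0, hα0⟩ := hdeg_cof n hns
  have htn' : t < sSup {r | ∃ α, (n, α) ∈ Γ ∧ r = Φ (n, α) / (n : ℝ)} := htn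
  have hne : {r | ∃ α, (n, α) ∈ Γ ∧ r = Φ (n, α) / (n : ℝ)}.Nonempty :=
    ⟨Φ (n, α0) / (n : ℝ), α0, hα0, rfl⟩
  obtain ⟨r, ⟨α, hα, rfl⟩, hr⟩ := exists_lt_of_lt_csSup hne htn'
  have hnpos : (0 : ℝ) < n := by exact_mod_cast hn1
  have hstrict : (n : ℝ) * t < Φ (n, α) := by
    rw [lt_div_iff₀ hnpos] at hr
    linarith
  -- now prove the three claims
  refine ⟨?_, ⟨Cg, hCg, fun p hp => hgrow p hp.1⟩, ?_⟩
  · rintro x ⟨hx, hx2⟩ y ⟨hy, hy2⟩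
    refine ⟨hΓadd _ hx _ hy, ?_⟩
    have h7 := hsuper x hx y hy
    have hxy : (((x + y : NPt d)).1 : ℝ) * t = (x.1 : ℝ) * t + (y.1 : ℝ) * t := by
      rw [Prod.fst_add]; push_cast; ring
    rw [hxy]
    linarith
  · set E := AddSubgroup.closure (nptToInt '' superlevel Γ Φ t) with hE
    have key : ∀ x ∈ Γ, nptToInt x ∈ E := by
      intro x hx
      set ε := Φ (n, α) - (n : ℝ) * t with hε
      have hεpos : 0 < ε := by simp only [hε]; linarith
      set k := ⌈(((x.1 : ℝ)) * t - Φ x) / ε⌉₊ with hk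
      have hk1 : ((x.1 : ℝ)) * t - Φ x ≤ (k : ℝ) * ε := by
        rw [← div_le_iff₀ hεpos]
        exact Nat.le_ceil _
      have hkn : (0 : ℝ) ≤ k := Nat.cast_nonneg k
      have hΦk := (hsmul k _ hα).2
      have hΦsplit : (k : ℝ) * Φ (n, α) = (k : ℝ) * ((n : ℝ) * t) + (k : ℝ) * ε := by
        rw [hε]; ring
      have hkε : 0 ≤ (k : ℝ) * ε := mul_nonneg hkn hεpos.le
      have hkq : k • ((n, α) : NPt d) ∈ superlevel Γ Φ t := by
        refine ⟨(hsmul k _ hα).1, ?_⟩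
        have h2 : (((k • ((n, α) : NPt d))).1 : ℝ) = (k : ℝ) * n := by
          rw [hsmul_fst]; push_cast; ring
        rw [h2]
        linarith
      have hkqx : k • ((n, α) : NPt d) + x ∈ superlevel Γ Φ t := by
        refine ⟨hΓadd _ (hsmul k _ hα).1 _ hx, ?_⟩
        have h3 := hsuper _ (hsmul k _ hα).1 _ hx
        have h2 : (((k • ((n, α) : NPt d) + x)).1 : ℝ) = (k : ℝ) * n + x.1 := by
          rw [Prod.fst_add, hsmul_fst]; push_cast; ring
        rw [h2]
        have hgoal : ((k : ℝ) * n + x.1) * t = (k : ℝ) * ((n : ℝ) * t) + (x.1 : ℝ) * t := by ring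
        rw [hgoal]
        linarith
      have e1 : nptToInt (k • ((n, α) : NPt d) + x) ∈ E := AddSubgroup.subset_closure ⟨_, hkqx, rfl⟩
      have e2 : nptToInt (k • ((n, α) : NPt d)) ∈ E := AddSubgroup.subset_closure ⟨_, hkq, rfl⟩
      have hrw : nptToInt x =
          nptToInt (k • ((n, α) : NPt d) + x) - nptToInt (k • ((n, α) : NPt d)) := by
        rw [nptToInt_add', add_sub_cancel_left]
      rw [hrw]
      exact E.sub_mem e1 e2
    rw [GeneratesFullLattice, eq_top_iff, ← hgen]
    refine (AddSubgroup.closure_le _).mpr ?_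
    rintro _ ⟨x, hx, rfl⟩
    exact key x hx
end

section
/- Let K be a non-Archimedean field, V a K-vector space of finite dimension d, and let N, N' be two non-Archimedean norms on V that are both diagonalizable in a common basis (s₁,…,s_d) of V. Assume the basis is ordered so that the sequence log N'(sᵢ) − log N(sᵢ) is non-increasing in i. Then for every 1 ≤ i ≤ d, the i-th relative spectral value satisfies λᵢ(N,N') = log N'(sᵢ) − log N(sᵢ). -/
open scoped BigOperators

/-- The `i`-th relative spectral value `λᵢ(N, N')`:
the supremum, over subspaces `W ⊆ V` with `dim W ≥ i`, of
`inf_{w ∈ W ∖ {0}} (log N'(w) − log N(w))`. -/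
noncomputable def specVal (K : Type*) {V : Type*} [Field K] [AddCommGroup V] [Module K V]
    (N N' : V → ℝ) (i : ℕ) : ℝ :=
  sSup {r | ∃ W : Submodule K V, i ≤ Module.finrank K W ∧
    r = sInf {s | ∃ w ∈ W, w ≠ (0 : V) ∧ s = Real.log (N' w) - Real.log (N w)}}

/-- The relative volume `vol(N, N') = (1/d)·Σ_{i=1}^d λᵢ(N, N')`, where `d = dim V`. -/
noncomputable def relVol (K : Type*) (V : Type*) [Field K] [AddCommGroup V] [Module K V]
    (N N' : V → ℝ) : ℝ :=
  (Module.finrank K V : ℝ)⁻¹ *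
    ∑ i ∈ Finset.range (Module.finrank K V), specVal K N N' (i + 1)

/-! Write `ρ = log N' - log N`. If `w = ∑ aⱼ sⱼ ≠ 0`, the maximum defining `N w` is attained at
some `j` with `aⱼ ≠ 0`, and there `ρ(sⱼ) ≤ ρ(w)`; symmetrically the maximum defining `N' w` gives
`k` with `a_k ≠ 0` and `ρ(w) ≤ ρ(s_k)`. Since `ρ(sⱼ)` is non-increasing, `ρ ≥ ρ(sᵢ)` on the
`i`-dimensional span of `s₁, …, sᵢ`, where `ρ(sᵢ)` is attained, and `ρ ≤ ρ(sᵢ)` on the span of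
`sᵢ, …, s_d`, which meets every subspace of dimension `≥ i` nontrivially. -/

open Module Submodule

noncomputable def logRatio {V : Type*} (N N' : V → ℝ) (v : V) : ℝ :=
  Real.log (N' v) - Real.log (N v)

theorem logRatio_swap {V : Type*} (N N' : V → ℝ) (v : V) : logRatio N' N v = -logRatio N N' v :=
  (neg_sub _ _).symm

section Spectral

variable {K V : Type*} [Field K] [AddCommGroup V] [Module K V] {N N' : V → ℝ}

theorem sInf_logRatio_eq {U : Submodule K V} {c : ℝ}
    (hc : ∀ w ∈ U, w ≠ 0 → c ≤ logRatio N N' w) {u : V} (huU : u ∈ U) (hu : u ≠ 0)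
    (huc : logRatio N N' u = c) :
    sInf {s | ∃ w ∈ U, w ≠ 0 ∧ s = logRatio N N' w} = c :=
  IsLeast.csInf_eq ⟨⟨u, huU, hu, huc.symm⟩, by rintro _ ⟨w, hwU, hw, rfl⟩; exact hc w hwU hw⟩

theorem sInf_logRatio_le (hbdd : BddBelow (logRatio N N' '' {0}ᶜ)) {W : Submodule K V}
    {w : V} (hwW : w ∈ W) (hw : w ≠ 0) :
    sInf {s | ∃ w ∈ W, w ≠ 0 ∧ s = logRatio N N' w} ≤ logRatio N N' w := by
  refine csInf_le ?_ ⟨w, hwW, hw, rfl⟩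
  obtain ⟨m, hm⟩ := hbdd
  exact ⟨m, by rintro _ ⟨v, -, hv, rfl⟩; exact hm ⟨v, hv, rfl⟩⟩

theorem Submodule.exists_mem_inf_ne_zero [FiniteDimensional K V] {W U : Submodule K V}
    (h : finrank K V < finrank K W + finrank K U) : ∃ w ∈ W, w ∈ U ∧ w ≠ 0 := by
  have : ¬Disjoint W U := fun hWU => (finrank_add_finrank_le_of_disjoint hWU).not_gt h
  simpa [Submodule.disjoint_def] using this

theorem specVal_eq_of_subspaces [FiniteDimensional K V] {n : ℕ} {c : ℝ}
    (hbdd : BddBelow (logRatio N N' '' {0}ᶜ)) {U U' : Submodule K V}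
    (hU : n ≤ finrank K U) (hge : ∀ w ∈ U, w ≠ 0 → c ≤ logRatio N N' w)
    {u : V} (huU : u ∈ U) (hu : u ≠ 0) (huc : logRatio N N' u = c)
    (hU' : finrank K V < n + finrank K U') (hle : ∀ w ∈ U', w ≠ 0 → logRatio N N' w ≤ c) :
    specVal K N N' n = c := by
  refine IsGreatest.csSup_eq ⟨⟨U, hU, (sInf_logRatio_eq hge huU hu huc).symm⟩, ?_⟩
  rintro _ ⟨W, hW, rfl⟩
  obtain ⟨w, hwW, hwU', hw⟩ := exists_mem_inf_ne_zero (W := W) (U := U')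
    (hU'.trans_le (by omega))
  exact (sInf_logRatio_le hbdd hwW hw).trans (hle w hwU' hw)

end Spectral

theorem IsNAnorm.pos_s7 {K V : Type*} [NormedField K] [AddCommGroup V] [Module K V] {N : V → ℝ}
    (hN : IsNAnorm K N) {v : V} (hv : v ≠ 0) : 0 < N v :=
  (hN.1 v).lt_of_ne fun h => hv ((hN.2.1 v).1 h.symm)

theorem Module.Basis.finrank_span_image {K V ι : Type*} [Field K] [AddCommGroup V] [Module K V]
    (b : Basis ι K V) (s : Finset ι) : finrank K (span K (b '' s)) = s.card := by
  rw [Set.image_eq_range]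
  exact (finrank_span_eq_card (b.linearIndependent.comp _ Subtype.val_injective)).trans
    (Fintype.card_coe s)

section Diagonal

variable {K V ι : Type*} [NormedField K] [AddCommGroup V] [Module K V] [Fintype ι]

def IsDiagonalIn (N : V → ℝ) (b : Basis ι K V) : Prop :=
  ∀ a : ι → K, N (∑ i, a i • b i) = ⨆ i, ‖a i‖ * N (b i)

variable {N N' : V → ℝ} {b : Basis ι K V}

namespace IsDiagonalIn

theorem apply_eq (hN : IsDiagonalIn N b) (w : V) : N w = ⨆ i, ‖b.repr w i‖ * N (b i) := by
  simpa only [b.sum_repr] using hN (b.repr w)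

theorem mul_le (hN : IsDiagonalIn N b) (w : V) (i : ι) : ‖b.repr w i‖ * N (b i) ≤ N w :=
  (le_ciSup (f := fun i => ‖b.repr w i‖ * N (b i)) (Set.finite_range _).bddAbove i).trans_eq
    (hN.apply_eq w).symm

theorem exists_repr_ne_zero_eq_mul (hN : IsDiagonalIn N b) (hb : ∀ i, 0 < N (b i)) {w : V}
    (hw : w ≠ 0) : ∃ i, b.repr w i ≠ 0 ∧ N w = ‖b.repr w i‖ * N (b i) := by
  obtain ⟨k, hk⟩ : ∃ k, b.repr w k ≠ 0 := by
    by_contra! h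
    exact hw (b.repr.map_eq_zero_iff.1 (Finsupp.ext h))
  have : Nonempty ι := ⟨k⟩
  obtain ⟨i, hi⟩ := exists_eq_ciSup_of_finite (f := fun i => ‖b.repr w i‖ * N (b i))
  have hNw : N w = ‖b.repr w i‖ * N (b i) := (hN.apply_eq w).trans hi.symm
  refine ⟨i, fun h0 => ?_, hNw⟩
  have : 0 < N w := (mul_pos (norm_pos_iff.2 hk) (hb k)).trans_le (hN.mul_le w k)
  simp [hNw, h0] at this

theorem exists_repr_ne_zero_logRatio_basis_le (hN : IsDiagonalIn N b) (hN' : IsDiagonalIn N' b)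
    (hb : ∀ i, 0 < N (b i)) (hb' : ∀ i, 0 < N' (b i)) {w : V} (hw : w ≠ 0) :
    ∃ i, b.repr w i ≠ 0 ∧ logRatio N N' (b i) ≤ logRatio N N' w := by
  obtain ⟨i, hi, hNw⟩ := hN.exists_repr_ne_zero_eq_mul hb hw
  have hc : ‖b.repr w i‖ ≠ 0 := norm_ne_zero_iff.2 hi
  have hN'w : Real.log ‖b.repr w i‖ + Real.log (N' (b i)) ≤ Real.log (N' w) := by
    rw [← Real.log_mul hc (hb' i).ne']
    exact Real.log_le_log (mul_pos (norm_pos_iff.2 hi) (hb' i)) (hN'.mul_le w i)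
  have hNw' : Real.log (N w) = Real.log ‖b.repr w i‖ + Real.log (N (b i)) := by
    rw [hNw, Real.log_mul hc (hb i).ne']
  refine ⟨i, hi, ?_⟩
  unfold logRatio
  linarith

theorem exists_repr_ne_zero_logRatio_le_basis (hN : IsDiagonalIn N b) (hN' : IsDiagonalIn N' b)
    (hb : ∀ i, 0 < N (b i)) (hb' : ∀ i, 0 < N' (b i)) {w : V} (hw : w ≠ 0) :
    ∃ i, b.repr w i ≠ 0 ∧ logRatio N N' w ≤ logRatio N N' (b i) := by
  obtain ⟨i, hi, hle⟩ := hN'.exists_repr_ne_zero_logRatio_basis_le hN hb' hb hw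
  simp only [logRatio_swap N N', neg_le_neg_iff] at hle
  exact ⟨i, hi, hle⟩

theorem bddBelow_logRatio (hN : IsDiagonalIn N b) (hN' : IsDiagonalIn N' b)
    (hb : ∀ i, 0 < N (b i)) (hb' : ∀ i, 0 < N' (b i)) : BddBelow (logRatio N N' '' {0}ᶜ) := by
  obtain ⟨m, hm⟩ := (Set.finite_range fun i => logRatio N N' (b i)).bddBelow
  refine ⟨m, ?_⟩
  rintro _ ⟨w, hw, rfl⟩
  obtain ⟨i, -, hi⟩ := hN.exists_repr_ne_zero_logRatio_basis_le hN' hb hb' hw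
  exact (hm ⟨i, rfl⟩).trans hi

variable [LinearOrder ι]

theorem logRatio_basis_le_of_mem_span_Iic (hN : IsDiagonalIn N b) (hN' : IsDiagonalIn N' b)
    (hb : ∀ i, 0 < N (b i)) (hb' : ∀ i, 0 < N' (b i))
    (hanti : Antitone fun i => logRatio N N' (b i)) {i : ι} {w : V}
    (hwi : w ∈ span K (b '' Set.Iic i)) (hw : w ≠ 0) : logRatio N N' (b i) ≤ logRatio N N' w := by
  obtain ⟨j, hj, hle⟩ := hN.exists_repr_ne_zero_logRatio_basis_le hN' hb hb' hw
  exact (hanti (b.mem_span_image.1 hwi (Finsupp.mem_support_iff.2 hj))).trans hle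

theorem logRatio_le_basis_of_mem_span_Ici (hN : IsDiagonalIn N b) (hN' : IsDiagonalIn N' b)
    (hb : ∀ i, 0 < N (b i)) (hb' : ∀ i, 0 < N' (b i))
    (hanti : Antitone fun i => logRatio N N' (b i)) {i : ι} {w : V}
    (hwi : w ∈ span K (b '' Set.Ici i)) (hw : w ≠ 0) : logRatio N N' w ≤ logRatio N N' (b i) := by
  obtain ⟨j, hj, hle⟩ := hN.exists_repr_ne_zero_logRatio_le_basis hN' hb hb' hw
  exact hle.trans (hanti (b.mem_span_image.1 hwi (Finsupp.mem_support_iff.2 hj)))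

end IsDiagonalIn

end Diagonal

theorem specVal_of_jointly_diagonalizable_general
    (K V : Type*) [NormedField K] [AddCommGroup V] [Module K V] (d : ℕ)
    (N N' : V → ℝ) (hN : IsNAnorm K N) (hN' : IsNAnorm K N')
    (b : Module.Basis (Fin d) K V)
    (hNdiag : ∀ a : Fin d → K, N (∑ i, a i • b i) = ⨆ i, ‖a i‖ * N (b i))
    (hN'diag : ∀ a : Fin d → K, N' (∑ i, a i • b i) = ⨆ i, ‖a i‖ * N' (b i))
    (hord : ∀ i j : Fin d, i ≤ j →
      Real.log (N' (b j)) - Real.log (N (b j)) ≤ Real.log (N' (b i)) - Real.log (N (b i))) :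
    ∀ i : Fin d, specVal K N N' (i.1 + 1) = Real.log (N' (b i)) - Real.log (N (b i)) := by
  intro i
  have : FiniteDimensional K V := b.finiteDimensional_of_finite
  have hb (j : Fin d) : 0 < N (b j) := hN.pos_s7 (b.ne_zero j)
  have hb' (j : Fin d) : 0 < N' (b j) := hN'.pos_s7 (b.ne_zero j)
  have hdiag : IsDiagonalIn N b := hNdiag
  have hdiag' : IsDiagonalIn N' b := hN'diag
  have hanti : Antitone fun j => logRatio N N' (b j) := hord
  refine specVal_eq_of_subspaces (hdiag.bddBelow_logRatio hdiag' hb hb')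
    (U := span K (b '' Finset.Iic i)) (U' := span K (b '' Finset.Ici i)) ?_
    (fun w hwU hw => hdiag.logRatio_basis_le_of_mem_span_Iic hdiag' hb hb' hanti
      (by rwa [← Finset.coe_Iic]) hw)
    (subset_span ⟨i, by simp, rfl⟩) (b.ne_zero i) rfl ?_
    (fun w hwU hw => hdiag.logRatio_le_basis_of_mem_span_Ici hdiag' hb hb' hanti
      (by rwa [← Finset.coe_Ici]) hw)
  · rw [b.finrank_span_image, Fin.card_Iic]
  · rw [finrank_eq_card_basis b, b.finrank_span_image, Fin.card_Ici, Fintype.card_fin]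
    omega

/-- For two norms diagonalizable in a common basis `(s₁, …, s_d)` ordered so that
`log N'(sᵢ) − log N(sᵢ)` is non-increasing, the `i`-th relative spectral value equals
`log N'(sᵢ) − log N(sᵢ)`. -/
theorem specVal_of_jointly_diagonalizable
    (K V : Type*) [NormedField K] [IsUltrametricDist K] [CompleteSpace K]
    [AddCommGroup V] [Module K V] [FiniteDimensional K V]
    (d : ℕ) (hdim : Module.finrank K V = d)
    (N N' : V → ℝ) (hN : IsNAnorm K N) (hN' : IsNAnorm K N')
    (b : Module.Basis (Fin d) K V)
    (hNdiag : ∀ a : Fin d → K, N (∑ i, a i • b i) = ⨆ i, ‖a i‖ * N (b i))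
    (hN'diag : ∀ a : Fin d → K, N' (∑ i, a i • b i) = ⨆ i, ‖a i‖ * N' (b i))
    (hord : ∀ i j : Fin d, i ≤ j →
      Real.log (N' (b j)) - Real.log (N (b j)) ≤ Real.log (N' (b i)) - Real.log (N (b i))) :
    ∀ i : Fin d, specVal K N N' (i.1 + 1) = Real.log (N' (b i)) - Real.log (N (b i)) :=
  specVal_of_jointly_diagonalizable_general K V d N N' hN hN' b hNdiag hN'diag hord
end
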